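/- arXiv:1704.06636 — 5 statements merged into one kernel-verified Lean document; each statement's English description precedes it below -/
import Mathlib

section
/- For every positive integer n, let D_odd^+(n) be the number of partitions of n into an even number of distinct parts with smallest part odd, and D_odd^-(n) the number of partitions of n into an odd number of distinct parts with smallest part odd. Then D_odd^+(n) − D_odd^-(n) equals 0 if n is not a perfect square, equals 1 if n is an even perfect square, and equals −1 if n is an odd perfect square. -/
/-!
A Franklin-type sign-reversing involution on finite sets of positive integers whose least
element is odd. For such a set let `1, 3, …, 2a-1` be its longest initial run of odd numbers
(its stair). Either its least odd element above `2a+1` has the form `e + (2a+1)` with `e` even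
and below every even element, and we `split` it into `2a+1` and `e`; or its least even element
`e` is small enough to be merged with `2a-1` into an odd element below all others above the
stair. The two moves are inverse to each other, keep the sum and change the number of parts by
one, so only the sets where neither applies survive: the stairs `{1, 3, …, 2a-1}`, of sum `a²`
and sign `(-1)^a`.
-/

open scoped Classical

open Finset

namespace OddMinPartition

def IsOddMin (s : Finset ℕ) : Prop := ∃ m ∈ s, Odd m ∧ ∀ x ∈ s, m ≤ x

def HasStair (s : Finset ℕ) (a : ℕ) : Prop := (∀ i < a, 2 * i + 1 ∈ s) ∧ 2 * a + 1 ∉ s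

def stair (a : ℕ) : Finset ℕ := (range a).image (2 * · + 1)

def split (s : Finset ℕ) (a e : ℕ) : Finset ℕ :=
  insert (2 * a + 1) (insert e (s.erase (e + (2 * a + 1))))

def merge (s : Finset ℕ) (a e : ℕ) : Finset ℕ :=
  insert (e + (2 * a + 1)) ((s.erase e).erase (2 * a + 1))

structure CanSplit (s : Finset ℕ) (a e : ℕ) : Prop where
  hasStair : HasStair s a
  even : Even e
  pos : 0 < e
  mem : e + (2 * a + 1) ∈ s
  le_of_odd : ∀ x ∈ s, Odd x → 2 * a + 1 < x → e + (2 * a + 1) ≤ x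
  lt_of_even : ∀ x ∈ s, Even x → e < x

/-- The stair has length `a + 1`: `merge` absorbs its top `2 * a + 1`, so that `split` with the
same `a` and `e` undoes it. -/
structure CanMerge (s : Finset ℕ) (a e : ℕ) : Prop where
  hasStair : HasStair s (a + 1)
  even : Even e
  pos : 0 < e
  mem : e ∈ s
  le_of_odd : ∀ x ∈ s, Odd x → 2 * a + 3 < x → e + (2 * a + 3) ≤ x
  le_of_even : ∀ x ∈ s, Even x → e ≤ x

variable {s : Finset ℕ} {a b e e' x : ℕ}

lemma IsOddMin.zero_notMem (h : IsOddMin s) : 0 ∉ s := fun h0 => by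
  obtain ⟨m, -, hm, hle⟩ := h
  grind

lemma isOddMin_of_one_mem (h1 : 1 ∈ s) (h0 : 0 ∉ s) : IsOddMin s :=
  ⟨1, h1, odd_one, fun _ hx => Nat.one_le_iff_ne_zero.2 (ne_of_mem_of_not_mem hx h0)⟩

lemma HasStair.unique (h : HasStair s a) (h' : HasStair s b) : a = b := by
  by_contra hne
  rcases lt_or_gt_of_ne hne with hab | hab
  · exact h.2 (h'.1 a hab)
  · exact h'.2 (h.1 b hab)

lemma exists_hasStair (s : Finset ℕ) : ∃ a, HasStair s a := by
  have hex : ∃ k, 2 * k + 1 ∉ s := ⟨∑ x ∈ s, x, fun h => by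
    have : 2 * ∑ x ∈ s, x + 1 ≤ ∑ x ∈ s, x := single_le_sum (f := fun x => x) (fun _ _ => Nat.zero_le _) h
    omega⟩
  exact ⟨Nat.find hex, fun i hi => not_not.1 (Nat.find_min hex hi), Nat.find_spec hex⟩

lemma mem_stair : x ∈ stair a ↔ ∃ i < a, 2 * i + 1 = x := by
  simp [stair]

lemma card_stair (a : ℕ) : #(stair a) = a := by
  rw [stair, card_image_of_injective _ (fun i j h => by simpa using h), card_range]

lemma sum_stair (a : ℕ) : ∑ x ∈ stair a, x = a * a := by
  rw [stair, sum_image (fun i _ j _ h => by simpa using h)]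
  induction a with
  | zero => rfl
  | succ a ih => rw [sum_range_succ, ih]; ring

lemma hasStair_stair (a : ℕ) : HasStair (stair a) a :=
  ⟨fun i hi => mem_stair.2 ⟨i, hi, rfl⟩, fun h => by obtain ⟨i, hi, h⟩ := mem_stair.1 h; omega⟩

lemma isOddMin_stair (ha : 0 < a) : IsOddMin (stair a) :=
  isOddMin_of_one_mem (mem_stair.2 ⟨0, ha, rfl⟩) fun h => by
    obtain ⟨i, -, h⟩ := mem_stair.1 h; omega

lemma mem_split : x ∈ split s a e ↔ x = 2 * a + 1 ∨ x = e ∨ x ≠ e + (2 * a + 1) ∧ x ∈ s := by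
  simp [split]

lemma mem_merge : x ∈ merge s a e ↔ x = e + (2 * a + 1) ∨ x ≠ 2 * a + 1 ∧ x ≠ e ∧ x ∈ s := by
  simp [merge]

namespace CanSplit

variable (h : CanSplit s a e)
include h

lemma notMem : e ∉ s := fun he => (h.lt_of_even e he h.even).false

lemma canMerge_split : CanMerge (split s a e) a e where
  hasStair := by
    refine ⟨fun i hi => mem_split.2 ?_, fun hs => ?_⟩
    · rcases Nat.lt_succ_iff_lt_or_eq.1 hi with hi | rfl
      · exact .inr (.inr ⟨by grind [h.even], h.hasStair.1 i hi⟩)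
      · exact .inl rfl
    · rcases mem_split.1 hs with hs | hs | ⟨hne, hs⟩
      · omega
      · grind [h.even]
      · have := h.le_of_odd _ hs (by grind) (by omega)
        grind [h.even, h.pos]
  even := h.even
  pos := h.pos
  mem := mem_split.2 (.inr (.inl rfl))
  le_of_odd x hx hodd hlt := by
    rcases mem_split.1 hx with rfl | rfl | ⟨hne, hx⟩
    · omega
    · grind [h.even]
    · have := h.le_of_odd x hx hodd (by omega)
      grind [h.even]
  le_of_even x hx heven := by
    rcases mem_split.1 hx with rfl | rfl | ⟨-, hx⟩
    · grind
    · rfl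
    · exact (h.lt_of_even x hx heven).le

lemma merge_split : merge (split s a e) a e = s := by
  ext x
  simp only [mem_merge, mem_split]
  have := h.hasStair.2
  have := h.mem
  have := h.notMem
  grind

lemma stair_notMem_insert_erase : 2 * a + 1 ∉ insert e (s.erase (e + (2 * a + 1))) := by
  simp only [mem_insert, mem_erase, not_or]
  exact ⟨by grind [h.even], fun h' => h.hasStair.2 h'.2⟩

lemma sum_split : ∑ x ∈ split s a e, x = ∑ x ∈ s, x := by
  rw [split, sum_insert h.stair_notMem_insert_erase,
    sum_insert fun he => h.notMem (mem_of_mem_erase he), ← add_sum_erase s _ h.mem]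
  ring

lemma card_split : #(split s a e) = #s + 1 := by
  rw [split, card_insert_of_notMem h.stair_notMem_insert_erase,
    card_insert_of_notMem fun he => h.notMem (mem_of_mem_erase he), card_erase_add_one h.mem]

lemma isOddMin_split (hs : IsOddMin s) : IsOddMin (split s a e) := by
  refine isOddMin_of_one_mem (mem_split.2 ?_) fun h0 => ?_
  · rcases Nat.eq_zero_or_pos a with rfl | ha
    · exact .inl rfl
    · exact .inr (.inr ⟨by omega, h.hasStair.1 0 ha⟩)
  · rcases mem_split.1 h0 with h0 | h0 | ⟨-, h0⟩
    · omega
    · exact h.pos.ne h0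
    · exact hs.zero_notMem h0

end CanSplit

namespace CanMerge

variable (h : CanMerge s a e)
include h

lemma add_notMem : e + (2 * a + 1) ∉ s := fun hs => by
  have h3 := h.hasStair.2
  rcases lt_or_ge (2 * a + 3) (e + (2 * a + 1)) with hlt | hle
  · have := h.le_of_odd _ hs (by grind [h.even]) hlt
    omega
  · grind [h.even, h.pos]

lemma canSplit_merge : CanSplit (merge s a e) a e where
  hasStair := by
    refine ⟨fun i hi => mem_merge.2 (.inr ⟨by omega, by grind [h.even], h.hasStair.1 i (by omega)⟩),
      fun hs => ?_⟩
    rcases mem_merge.1 hs with hs | ⟨hne, -⟩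
    · grind [h.pos]
    · exact hne rfl
  even := h.even
  pos := h.pos
  mem := mem_merge.2 (.inl rfl)
  le_of_odd x hx hodd hlt := by
    rcases mem_merge.1 hx with rfl | ⟨hne, -, hx⟩
    · rfl
    · have h3 := h.hasStair.2
      have : x ≠ 2 * a + 3 := fun hx3 => h3 (hx3 ▸ hx)
      have := h.le_of_odd x hx hodd (by grind)
      omega
  lt_of_even x hx heven := by
    rcases mem_merge.1 hx with rfl | ⟨-, hne, hx⟩
    · grind [h.even]
    · exact lt_of_le_of_ne (h.le_of_even x hx heven) (Ne.symm hne)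

lemma split_merge : split (merge s a e) a e = s := by
  ext x
  simp only [mem_merge, mem_split]
  have := h.hasStair.1 a (by omega)
  have := h.mem
  have := h.add_notMem
  grind

lemma sum_merge : ∑ x ∈ merge s a e, x = ∑ x ∈ s, x := by
  conv_rhs => rw [← h.split_merge]
  exact h.canSplit_merge.sum_split.symm

lemma card_merge : #(merge s a e) + 1 = #s := by
  conv_rhs => rw [← h.split_merge]
  exact h.canSplit_merge.card_split.symm

lemma isOddMin_merge (hs : IsOddMin s) : IsOddMin (merge s a e) := by
  rcases Nat.eq_zero_or_pos a with rfl | ha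
  · refine ⟨e + 1, mem_merge.2 (.inl rfl), by grind [h.even], fun x hx => ?_⟩
    rcases mem_merge.1 hx with rfl | ⟨hne1, hne, hx⟩
    · rfl
    · rcases Nat.even_or_odd x with hx2 | hx2
      · have := h.le_of_even x hx hx2
        omega
      · have h3 : x ≠ 3 := fun hx3 => h.hasStair.2 (by rwa [hx3] at hx)
        have := hs.zero_notMem
        have : x ≠ 0 := ne_of_mem_of_not_mem hx this
        have := h.le_of_odd x hx hx2 (by grind)
        omega
  · refine isOddMin_of_one_mem (mem_merge.2 (.inr ⟨by omega, by grind [h.even],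
      h.hasStair.1 0 (by omega)⟩)) fun h0 => ?_
    rcases mem_merge.1 h0 with h0 | ⟨-, -, h0⟩
    · omega
    · exact hs.zero_notMem h0

end CanMerge

lemma CanSplit.unique (h : CanSplit s a e) (h' : CanSplit s b e') : a = b ∧ e = e' := by
  obtain rfl := h.hasStair.unique h'.hasStair
  have := h.le_of_odd _ h'.mem (by grind [h'.even]) (by grind [h'.pos])
  have := h'.le_of_odd _ h.mem (by grind [h.even]) (by grind [h.pos])
  exact ⟨rfl, by omega⟩

lemma CanMerge.unique (h : CanMerge s a e) (h' : CanMerge s b e') : a = b ∧ e = e' := by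
  have := h.hasStair.unique h'.hasStair
  exact ⟨by omega, le_antisymm (h.le_of_even _ h'.mem h'.even) (h'.le_of_even _ h.mem h.even)⟩

lemma CanSplit.not_canMerge (h : CanSplit s a e) (h' : CanMerge s b e') : False := by
  obtain rfl := h.hasStair.unique h'.hasStair
  have := h.lt_of_even _ h'.mem h'.even
  have := h'.le_of_odd _ h.mem (by grind [h.even]) (by grind [h.pos])
  omega

noncomputable def toggle (s : Finset ℕ) : Finset ℕ :=
  if h : ∃ p : ℕ × ℕ, CanSplit s p.1 p.2 then split s h.choose.1 h.choose.2
  else if h : ∃ p : ℕ × ℕ, CanMerge s p.1 p.2 then merge s h.choose.1 h.choose.2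
  else s

lemma CanSplit.toggle_eq (h : CanSplit s a e) : toggle s = split s a e := by
  have hex : ∃ p : ℕ × ℕ, CanSplit s p.1 p.2 := ⟨(a, e), h⟩
  obtain ⟨ha, he⟩ := hex.choose_spec.unique h
  rw [toggle, dif_pos hex, ha, he]

lemma CanMerge.toggle_eq (h : CanMerge s a e) : toggle s = merge s a e := by
  have hex : ∃ p : ℕ × ℕ, CanMerge s p.1 p.2 := ⟨(a, e), h⟩
  obtain ⟨ha, he⟩ := hex.choose_spec.unique h
  rw [toggle, dif_neg fun ⟨_, hp⟩ => hp.not_canMerge h, dif_pos hex, ha, he]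

lemma toggle_stair (a : ℕ) : toggle (stair a) = stair a := by
  rw [toggle, dif_neg, dif_neg]
  · rintro ⟨⟨b, e⟩, h⟩
    obtain ⟨i, -, hi⟩ := mem_stair.1 h.mem
    grind [h.even]
  · rintro ⟨⟨b, e⟩, h⟩
    obtain rfl := (hasStair_stair a).unique h.hasStair
    obtain ⟨i, hi, hie⟩ := mem_stair.1 h.mem
    grind [h.pos]

lemma eq_stair_of_forall_odd_le (ha : HasStair s a) (hs : ∀ x ∈ s, Odd x ∧ x ≤ 2 * a + 1) :
    s = stair a := by
  ext x
  refine ⟨fun hx => mem_stair.2 ?_, fun hx => ?_⟩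
  · obtain ⟨⟨i, rfl⟩, hle⟩ := hs x hx
    exact ⟨i, lt_of_le_of_ne (by omega) fun hia => ha.2 (hia ▸ hx), rfl⟩
  · obtain ⟨i, hi, rfl⟩ := mem_stair.1 hx
    exact ha.1 i hi

lemma exists_canSplit (ha : HasStair s a) (hx : x ∈ s) (hodd : Odd x) (hlt : 2 * a + 1 < x)
    (hx_lt : ∀ y ∈ s, Even y → x < y + (2 * a + 1)) : ∃ e, CanSplit s a e := by
  have hex : ∃ o, o ∈ s ∧ Odd o ∧ 2 * a + 1 < o := ⟨x, hx, hodd, hlt⟩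
  obtain ⟨hos, hoo, hlto⟩ := Nat.find_spec hex
  have hox : Nat.find hex ≤ x := Nat.find_min' hex ⟨hx, hodd, hlt⟩
  refine ⟨Nat.find hex - (2 * a + 1), ha, by grind, by omega, by rwa [Nat.sub_add_cancel hlto.le],
    fun y hy hyo hlty => ?_, fun y hy hye => ?_⟩
  · have := Nat.find_min' hex ⟨hy, hyo, hlty⟩
    omega
  · have := hx_lt y hy hye
    omega

lemma exists_canMerge (hs : IsOddMin s) (ha : HasStair s a) (he : e ∈ s) (heven : Even e)
    (hemin : ∀ y ∈ s, Even y → e ≤ y)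
    (hodd_le : ∀ x ∈ s, Odd x → 2 * a + 1 < x → e + (2 * a + 1) ≤ x) : ∃ b, CanMerge s b e := by
  obtain ⟨b, rfl⟩ : ∃ b, a = b + 1 := by
    refine Nat.exists_eq_add_one.2 (Nat.pos_of_ne_zero fun ha0 => ?_)
    obtain ⟨m, hm, hmo, hle⟩ := hs
    have : m ≠ 1 := fun hm1 => ha.2 (by simpa [ha0, hm1] using hm)
    have := hodd_le m hm hmo (by grind)
    have := hle e he
    omega
  refine ⟨b, ha, heven, Nat.pos_of_ne_zero fun he0 => hs.zero_notMem (he0 ▸ he), he,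
    fun x hx hodd hlt => ?_, hemin⟩
  have := hodd_le x hx hodd (by omega)
  omega

lemma IsOddMin.exists_stair_or_canSplit_or_canMerge (hs : IsOddMin s) :
    (∃ a, s = stair a) ∨ (∃ a e, CanSplit s a e) ∨ ∃ a e, CanMerge s a e := by
  obtain ⟨a, ha⟩ := exists_hasStair s
  by_cases hE : ∃ y, y ∈ s ∧ Even y
  · obtain ⟨hes, hee⟩ := Nat.find_spec hE
    have hemin : ∀ y ∈ s, Even y → Nat.find hE ≤ y := fun y hy hye => Nat.find_min' hE ⟨hy, hye⟩
    by_cases hO : ∃ x ∈ s, Odd x ∧ 2 * a + 1 < x ∧ x < Nat.find hE + (2 * a + 1)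
    · obtain ⟨x, hx, hodd, hlt, hxe⟩ := hO
      exact .inr (.inl ⟨a, exists_canSplit ha hx hodd hlt fun y hy hye => by
        have := hemin y hy hye
        omega⟩)
    · push Not at hO
      obtain ⟨b, h⟩ := exists_canMerge hs ha hes hee hemin hO
      exact .inr (.inr ⟨b, _, h⟩)
  · push Not at hE
    by_cases hO : ∃ x ∈ s, Odd x ∧ 2 * a + 1 < x
    · obtain ⟨x, hx, hodd, hlt⟩ := hO
      exact .inr (.inl ⟨a, exists_canSplit ha hx hodd hlt fun y hy hye => (hE y hy hye).elim⟩)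
    · push Not at hO
      refine .inl ⟨a, eq_stair_of_forall_odd_le ha fun x hx => ?_⟩
      have hodd : Odd x := Nat.not_even_iff_odd.1 (hE x hx)
      exact ⟨hodd, hO x hx hodd⟩

namespace IsOddMin

variable (hs : IsOddMin s)
include hs

lemma toggle_toggle : toggle (toggle s) = s := by
  rcases hs.exists_stair_or_canSplit_or_canMerge with ⟨a, rfl⟩ | ⟨a, e, h⟩ | ⟨a, e, h⟩
  · rw [toggle_stair, toggle_stair]
  · rw [h.toggle_eq, h.canMerge_split.toggle_eq, h.merge_split]
  · rw [h.toggle_eq, h.canSplit_merge.toggle_eq, h.split_merge]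

lemma isOddMin_toggle : IsOddMin (toggle s) := by
  rcases hs.exists_stair_or_canSplit_or_canMerge with ⟨a, rfl⟩ | ⟨a, e, h⟩ | ⟨a, e, h⟩
  · rwa [toggle_stair]
  · rw [h.toggle_eq]
    exact h.isOddMin_split hs
  · rw [h.toggle_eq]
    exact h.isOddMin_merge hs

lemma sum_toggle : ∑ x ∈ toggle s, x = ∑ x ∈ s, x := by
  rcases hs.exists_stair_or_canSplit_or_canMerge with ⟨a, rfl⟩ | ⟨a, e, h⟩ | ⟨a, e, h⟩
  · rw [toggle_stair]
  · rw [h.toggle_eq, h.sum_split]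
  · rw [h.toggle_eq, h.sum_merge]

lemma neg_one_pow_card_toggle (hne : toggle s ≠ s) : (-1 : ℤ) ^ #(toggle s) = -(-1) ^ #s := by
  rcases hs.exists_stair_or_canSplit_or_canMerge with ⟨a, rfl⟩ | ⟨a, e, h⟩ | ⟨a, e, h⟩
  · exact absurd (toggle_stair a) hne
  · rw [h.toggle_eq, h.card_split, pow_succ, mul_neg_one]
  · rw [h.toggle_eq, ← h.card_merge, pow_succ, mul_neg_one, neg_neg]

lemma exists_eq_stair_of_toggle_eq (hfix : toggle s = s) : ∃ a, s = stair a := by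
  rcases hs.exists_stair_or_canSplit_or_canMerge with hst | ⟨a, e, h⟩ | ⟨a, e, h⟩
  · exact hst
  · have := h.card_split
    rw [← h.toggle_eq, hfix] at this
    omega
  · have := h.card_merge
    rw [← h.toggle_eq, hfix] at this
    omega

end IsOddMin

noncomputable def oddMinSets (n : ℕ) : Finset (Finset ℕ) :=
  {s ∈ (range (n + 1)).powerset | ∑ x ∈ s, x = n ∧ IsOddMin s}

lemma mem_oddMinSets {n : ℕ} : s ∈ oddMinSets n ↔ ∑ x ∈ s, x = n ∧ IsOddMin s := by
  refine mem_filter.trans (and_iff_right_of_imp fun ⟨hsum, _⟩ => mem_powerset.2 fun x hx => ?_)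
  have : x ≤ ∑ x ∈ s, x := single_le_sum (f := fun x => x) (fun _ _ => Nat.zero_le _) hx
  exact mem_range.2 (by omega)

lemma toggle_mem_oddMinSets {n : ℕ} (hs : s ∈ oddMinSets n) : toggle s ∈ oddMinSets n := by
  obtain ⟨hsum, hs⟩ := mem_oddMinSets.1 hs
  exact mem_oddMinSets.2 ⟨hs.sum_toggle.trans hsum, hs.isOddMin_toggle⟩

lemma sum_filter_toggle_ne_neg_one_pow_card (n : ℕ) :
    ∑ s ∈ oddMinSets n with toggle s ≠ s, (-1 : ℤ) ^ #s = 0 := by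
  refine sum_involution (fun s _ => toggle s) (fun s hs => ?_) (fun s hs _ => (mem_filter.1 hs).2)
    (fun s hs => ?_) (fun s hs => ?_) <;> obtain ⟨hs, hne⟩ := mem_filter.1 hs
  · rw [(mem_oddMinSets.1 hs).2.neg_one_pow_card_toggle hne, add_neg_cancel]
  · rw [mem_filter, (mem_oddMinSets.1 hs).2.toggle_toggle]
    exact ⟨toggle_mem_oddMinSets hs, Ne.symm hne⟩
  · exact (mem_oddMinSets.1 hs).2.toggle_toggle

lemma filter_toggle_eq_self_oddMinSets {n : ℕ} (hn : 0 < n) :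
    {s ∈ oddMinSets n | toggle s = s} = {a ∈ range (n + 1) | a * a = n}.image stair := by
  ext s
  simp only [mem_filter, mem_image, mem_range, mem_oddMinSets]
  constructor
  · rintro ⟨⟨hsum, hs⟩, hfix⟩
    obtain ⟨a, rfl⟩ := hs.exists_eq_stair_of_toggle_eq hfix
    rw [sum_stair] at hsum
    exact ⟨a, ⟨by nlinarith, hsum⟩, rfl⟩
  · rintro ⟨a, ⟨-, rfl⟩, rfl⟩
    exact ⟨⟨sum_stair a, isOddMin_stair (Nat.pos_of_mul_pos_left hn)⟩, toggle_stair a⟩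

lemma sum_neg_one_pow_card_oddMinSets {n : ℕ} (hn : 0 < n) :
    ∑ s ∈ oddMinSets n, (-1 : ℤ) ^ #s = if IsSquare n then (if Even n then 1 else -1) else 0 := by
  rw [← sum_filter_add_sum_filter_not _ (fun s => toggle s = s),
    sum_filter_toggle_ne_neg_one_pow_card, add_zero, filter_toggle_eq_self_oddMinSets hn]
  by_cases hsq : IsSquare n
  · obtain ⟨r, rfl⟩ := hsq
    have hroot : {a ∈ range (r * r + 1) | a * a = r * r} = {r} := by
      ext a
      simp only [mem_filter, mem_range, mem_singleton, Nat.mul_self_inj]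
      constructor
      · exact And.right
      · rintro rfl
        exact ⟨by nlinarith, rfl⟩
    rw [if_pos ⟨r, rfl⟩, hroot, image_singleton, sum_singleton, card_stair, neg_one_pow_eq_ite]
    simp only [Nat.even_mul, or_self]
  · rw [if_neg hsq, filter_eq_empty_iff.2 fun a _ ha => hsq ⟨a, ha.symm⟩, image_empty, sum_empty]

lemma card_filter_even_sub_card_filter_odd {α : Type*} (s : Finset α) (f : α → ℕ) :
    (#{x ∈ s | Even (f x)} : ℤ) - #{x ∈ s | Odd (f x)} = ∑ x ∈ s, (-1 : ℤ) ^ f x := by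
  rw [card_filter, card_filter]
  push_cast
  rw [← sum_sub_distrib]
  refine sum_congr rfl fun x _ => ?_
  rcases Nat.even_or_odd (f x) with h | h
  · simp [h, h.neg_one_pow, Nat.not_odd_iff_even.2 h]
  · simp [h, h.neg_one_pow, Nat.not_even_iff_odd.2 h]

lemma card_filter_distinct_partition_eq (n : ℕ) (q : ℕ → Prop) [DecidablePred q] :
    #{l : n.Partition | l.parts.Nodup ∧ q (Multiset.card l.parts) ∧
      ∃ s ∈ l.parts, Odd s ∧ ∀ x ∈ l.parts, s ≤ x} = #{s ∈ oddMinSets n | q #s} := by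
  refine card_bij (fun l _ => l.parts.toFinset) (fun l hl => ?_) (fun l hl l' hl' h => ?_)
    fun s hs => ?_
  · obtain ⟨-, hnd, hq, m, hm, hodd, hle⟩ := mem_filter.1 hl
    rw [← Multiset.toFinset_eq hnd]
    refine mem_filter.2 ⟨mem_oddMinSets.2 ⟨?_, m, hm, hodd, hle⟩, hq⟩
    exact (sum_val _).symm.trans l.parts_sum
  · exact Nat.Partition.ext <| Multiset.Nodup.toFinset_inj (mem_filter.1 hl).2.1
      (mem_filter.1 hl').2.1 h
  · obtain ⟨hs, hq⟩ := mem_filter.1 hs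
    obtain ⟨hsum, hodd⟩ := mem_oddMinSets.1 hs
    refine ⟨⟨s.val, fun hx => Nat.pos_of_ne_zero (ne_of_mem_of_not_mem hx hodd.zero_notMem),
      by rw [sum_val, ← hsum]; rfl⟩, mem_filter.2 ⟨mem_univ _, s.nodup, hq, hodd⟩,
      s.val_toFinset⟩

end OddMinPartition

open OddMinPartition

/-- `D⁺_odd(n) - D⁻_odd(n)` equals `0` if `n` is not a square, `1` if `n` is an even
square, and `-1` if `n` is an odd square.  Here `D⁺_odd(n)` (resp. `D⁻_odd(n)`) counts
partitions of `n` into an even (resp. odd) number of distinct parts whose smallest part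
is odd. -/
theorem stmt3 (n : ℕ) (hn : 0 < n) :
    ((Finset.univ.filter fun l : n.Partition =>
        l.parts.Nodup ∧ Even (Multiset.card l.parts) ∧
          ∃ s ∈ l.parts, Odd s ∧ ∀ x ∈ l.parts, s ≤ x).card : ℤ) -
      ((Finset.univ.filter fun l : n.Partition =>
        l.parts.Nodup ∧ Odd (Multiset.card l.parts) ∧
          ∃ s ∈ l.parts, Odd s ∧ ∀ x ∈ l.parts, s ≤ x).card : ℤ) =
    if IsSquare n then (if Even n then 1 else -1) else 0 := by
  rw [card_filter_distinct_partition_eq n Even, card_filter_distinct_partition_eq n Odd,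
    card_filter_even_sub_card_filter_odd, sum_neg_one_pow_card_oddMinSets hn]
end

section
/- (q-Binomial Theorem) For complex numbers a, z, q with |q| < 1 and |z| < 1, one has ∏_{m=0}^∞ (1 − a z q^m) / ∏_{m=0}^∞ (1 − z q^m) = ∑_{n=0}^∞ [∏_{j=0}^{n−1}(1 − a q^j) / ∏_{j=1}^{n}(1 − q^j)] · z^n. -/
/-!
The series `F w = ∑ₙ ((a;q)ₙ / (q;q)ₙ) wⁿ` satisfies `(1 - w) F w = (1 - a w) F (q w)`: comparing
coefficients, this is the recurrence `(1 - qⁿ⁺¹) cₙ₊₁ = (1 - a qⁿ) cₙ` of its coefficients.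
Iterating it gives `F z · (z;q)_N = F (qᴺ z) · (az;q)_N`. As `N → ∞` both finite products
converge, and `F (qᴺ z) → F 0 = 1` by dominated convergence.
-/

open Filter Finset Topology

section

variable {𝕜 : Type*} [NormedField 𝕜] {a q : 𝕜}

lemma summable_norm_mul_pow_of_tendsto_ratio {c r : ℕ → 𝕜} (hc : ∀ n, c (n + 1) = c n * r n)
    (hr : Tendsto r atTop (𝓝 1)) {w : 𝕜} (hw : ‖w‖ < 1) :
    Summable fun n ↦ ‖c n * w ^ n‖ := by
  obtain ⟨ρ, hwρ, hρ⟩ := exists_between hw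
  have hratio : ∀ᶠ n in atTop, ‖w‖ * ‖r n‖ < ρ := by
    have : Tendsto (fun n ↦ ‖w‖ * ‖r n‖) atTop (𝓝 ‖w‖) := by
      simpa using hr.norm.const_mul ‖w‖
    exact this.eventually_lt_const hwρ
  refine summable_of_ratio_norm_eventually_le hρ ?_
  filter_upwards [hratio] with n hn
  calc ‖‖c (n + 1) * w ^ (n + 1)‖‖ = ‖w‖ * ‖r n‖ * ‖c n * w ^ n‖ := by
        rw [norm_norm, hc, pow_succ]
        simp only [norm_mul, norm_pow]
        ring
    _ ≤ ρ * ‖‖c n * w ^ n‖‖ := by rw [norm_norm]; gcongr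

lemma norm_pow_mul_le (hq : ‖q‖ ≤ 1) (z : 𝕜) (N : ℕ) : ‖q ^ N * z‖ ≤ ‖z‖ := by
  rw [norm_mul, norm_pow]
  exact mul_le_of_le_one_left (norm_nonneg z) (pow_le_one₀ (norm_nonneg q) hq)

lemma one_sub_mul_pow_ne_zero {c : 𝕜} (hq : ‖q‖ ≤ 1) (hc : ‖c‖ < 1) (m : ℕ) :
    1 - c * q ^ m ≠ 0 := by
  have hlt : ‖c * q ^ m‖ < 1 := by
    rw [norm_mul, norm_pow]
    exact mul_lt_one_of_nonneg_of_lt_one_left (norm_nonneg c) hc (pow_le_one₀ (norm_nonneg q) hq)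
  exact sub_ne_zero.mpr fun h ↦ by simp [← h] at hlt

lemma mul_prod_eq_of_functional_eq {F : 𝕜 → 𝕜}
    (hF : ∀ w, ‖w‖ < 1 → (1 - w) * F w = (1 - a * w) * F (q * w)) (hq : ‖q‖ ≤ 1) {z : 𝕜}
    (hz : ‖z‖ < 1) (N : ℕ) :
    F z * ∏ m ∈ range N, (1 - z * q ^ m) = F (q ^ N * z) * ∏ m ∈ range N, (1 - a * z * q ^ m) := by
  induction N with
  | zero => simp
  | succ N ih =>
    have hstep := hF (q ^ N * z) ((norm_pow_mul_le hq z N).trans_lt hz)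
    rw [← mul_assoc q, ← pow_succ'] at hstep
    rw [prod_range_succ, prod_range_succ, ← mul_assoc, ih]
    linear_combination (∏ m ∈ range N, (1 - a * z * q ^ m)) * hstep

variable (a q) in
noncomputable def qBinomCoeff (n : ℕ) : 𝕜 :=
  (∏ j ∈ range n, (1 - a * q ^ j)) / ∏ j ∈ range n, (1 - q ^ (j + 1))

variable (a q) in
noncomputable def qBinomSeries (w : 𝕜) : 𝕜 :=
  ∑' n, qBinomCoeff a q n * w ^ n

lemma qBinomCoeff_succ (n : ℕ) :
    qBinomCoeff a q (n + 1) = qBinomCoeff a q n * ((1 - a * q ^ n) / (1 - q ^ (n + 1))) := by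
  simp only [qBinomCoeff, prod_range_succ, div_mul_div_comm]

lemma qBinomCoeff_succ_mul {n : ℕ} (hq : q ^ (n + 1) ≠ 1) :
    qBinomCoeff a q (n + 1) * (1 - q ^ (n + 1)) = qBinomCoeff a q n * (1 - a * q ^ n) := by
  rw [qBinomCoeff_succ, mul_assoc, div_mul_cancel₀ _ (sub_ne_zero.mpr hq.symm)]

lemma summable_norm_qBinomCoeff_mul_pow (hq : ‖q‖ < 1) {w : 𝕜} (hw : ‖w‖ < 1) :
    Summable fun n ↦ ‖qBinomCoeff a q n * w ^ n‖ := by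
  refine summable_norm_mul_pow_of_tendsto_ratio qBinomCoeff_succ ?_ hw
  have hpow := tendsto_pow_atTop_nhds_zero_of_norm_lt_one hq
  have hden : Tendsto (fun n ↦ 1 - q ^ (n + 1)) atTop (𝓝 (1 - 0)) :=
    (hpow.comp (tendsto_add_atTop_nat 1)).const_sub 1
  have hlim := ((hpow.const_mul a).const_sub 1).div hden (by simp)
  rwa [mul_zero, sub_zero, div_one] at hlim

variable [CompleteSpace 𝕜]

lemma tendsto_tsum_mul_pow_of_tendsto_zero {c : ℕ → 𝕜} {z : 𝕜}
    (hc : Summable fun n ↦ ‖c n * z ^ n‖) {w : ℕ → 𝕜} (hw : Tendsto w atTop (𝓝 0))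
    (hwz : ∀ N, ‖w N‖ ≤ ‖z‖) :
    Tendsto (fun N ↦ ∑' n, c n * w N ^ n) atTop (𝓝 (c 0)) := by
  have hlim : Tendsto (fun N ↦ ∑' n, c n * w N ^ n) atTop (𝓝 (∑' n, c n * 0 ^ n)) := by
    refine tendsto_tsum_of_dominated_convergence hc (fun n ↦ (hw.pow n).const_mul (c n))
      (Eventually.of_forall fun N n ↦ ?_)
    simp only [norm_mul, norm_pow]
    gcongr
    exact hwz N
  rwa [tsum_eq_single 0 fun n hn ↦ by simp [zero_pow hn], pow_zero, mul_one] at hlim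

lemma multipliable_one_sub_mul_pow (c : 𝕜) (hq : ‖q‖ < 1) :
    Multipliable fun m : ℕ ↦ 1 - c * q ^ m := by
  simpa [sub_eq_add_neg] using multipliable_one_add_of_summable (f := fun m : ℕ ↦ -(c * q ^ m))
    (by simpa using (summable_geometric_of_lt_one (norm_nonneg q) hq).mul_left ‖c‖)

lemma tprod_one_sub_mul_pow_ne_zero {c : 𝕜} (hq : ‖q‖ < 1) (hc : ‖c‖ < 1) :
    ∏' m : ℕ, (1 - c * q ^ m) ≠ 0 := by
  simpa [sub_eq_add_neg] using tprod_one_add_ne_zero_of_summable (f := fun m : ℕ ↦ -(c * q ^ m))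
    (by simpa [← sub_eq_add_neg] using one_sub_mul_pow_ne_zero hq.le hc)
    (by simpa using (summable_geometric_of_lt_one (norm_nonneg q) hq).mul_left ‖c‖)

lemma qBinomSeries_functional_eq (hq : ‖q‖ < 1) {w : 𝕜} (hw : ‖w‖ < 1) :
    (1 - w) * qBinomSeries a q w = (1 - a * w) * qBinomSeries a q (q * w) := by
  have hqw : ‖q * w‖ < 1 := by simpa using (norm_pow_mul_le hq.le w 1).trans_lt hw
  have hs := (summable_norm_qBinomCoeff_mul_pow (a := a) hq hw).of_norm
  have hsq := (summable_norm_qBinomCoeff_mul_pow (a := a) hq hqw).of_norm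
  have hsdiff : Summable fun n ↦ qBinomCoeff a q n * (1 - q ^ n) * w ^ n :=
    (hs.sub hsq).congr fun n ↦ by ring
  have hq1 : ∀ n : ℕ, q ^ (n + 1) ≠ 1 := fun n h ↦
    (pow_lt_one₀ (norm_nonneg q) hq n.succ_ne_zero).ne (by rw [← norm_pow, h, norm_one])
  have hdiff : qBinomSeries a q w - qBinomSeries a q (q * w) =
      w * (qBinomSeries a q w - a * qBinomSeries a q (q * w)) :=
    calc qBinomSeries a q w - qBinomSeries a q (q * w)
        = ∑' n, qBinomCoeff a q n * (1 - q ^ n) * w ^ n := by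
          rw [qBinomSeries, qBinomSeries, ← hs.tsum_sub hsq]
          congr 1 with n
          ring
      _ = ∑' n, qBinomCoeff a q (n + 1) * (1 - q ^ (n + 1)) * w ^ (n + 1) := by
          rw [hsdiff.tsum_eq_zero_add]
          simp
      _ = ∑' n, w * (qBinomCoeff a q n * w ^ n - a * (qBinomCoeff a q n * (q * w) ^ n)) := by
          congr 1 with n
          rw [qBinomCoeff_succ_mul (hq1 n)]
          ring
      _ = w * (qBinomSeries a q w - a * qBinomSeries a q (q * w)) := by
          rw [tsum_mul_left, hs.tsum_sub (hsq.mul_left a), tsum_mul_left]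
          rfl
  linear_combination hdiff

lemma tendsto_qBinomSeries_pow_mul (hq : ‖q‖ < 1) {z : 𝕜} (hz : ‖z‖ < 1) :
    Tendsto (fun N : ℕ ↦ qBinomSeries a q (q ^ N * z)) atTop (𝓝 1) := by
  have hlim : Tendsto (fun N : ℕ ↦ q ^ N * z) atTop (𝓝 0) := by
    simpa using (tendsto_pow_atTop_nhds_zero_of_norm_lt_one hq).mul_const z
  simpa [qBinomSeries, qBinomCoeff] using
    tendsto_tsum_mul_pow_of_tendsto_zero (summable_norm_qBinomCoeff_mul_pow hq hz) hlim
      (norm_pow_mul_le hq.le z)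

end

/-- The `q`-Binomial Theorem: for `|q| < 1` and `|z| < 1`,
`(az;q)_∞ / (z;q)_∞ = ∑_{n ≥ 0} ((a;q)_n / (q;q)_n) zⁿ`. -/
theorem stmt9 (a z q : ℂ) (hq : ‖q‖ < 1) (hz : ‖z‖ < 1) :
    (∏' m : ℕ, (1 - a * z * q ^ m)) / (∏' m : ℕ, (1 - z * q ^ m)) =
      ∑' n : ℕ, (∏ j ∈ Finset.range n, (1 - a * q ^ j)) /
        (∏ j ∈ Finset.range n, (1 - q ^ (j + 1))) * z ^ n := by
  change _ = qBinomSeries a q z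
  have hden := (multipliable_one_sub_mul_pow z hq).hasProd.tendsto_prod_nat
  have hnum := (multipliable_one_sub_mul_pow (a * z) hq).hasProd.tendsto_prod_nat
  have hleft := hden.const_mul (qBinomSeries a q z)
  have hright := ((tendsto_qBinomSeries_pow_mul hq hz).mul hnum).congr fun N ↦
    (mul_prod_eq_of_functional_eq (fun w ↦ qBinomSeries_functional_eq hq) hq.le hz N).symm
  rw [div_eq_iff (tprod_one_sub_mul_pow_ne_zero hq hz), tendsto_nhds_unique hleft hright, one_mul]
end

section
/- For every complex number q with |q| < 1, one has (∏_{n=1}^∞ (1 − q^n))^2 / ∏_{n=1}^∞ (1 − q^{2n}) = 1 + 2 ∑_{n=1}^∞ (−1)^n q^{n^2}; that is, (q;q)_∞^2 / (q^2;q^2)_∞ = 1 + 2 ∑_{n≥1} (−1)^n q^{n^2}. -/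
/-!
Write `P_m = (q²;q²)_m` and `D_m = (q;q²)_m`. The `q²`-binomial theorem expands
`∏_{j<2m} (q^{2m} - q^{2j+1}) = (-1)^m q^{3m²} D_m²` into the finite Gauss identity
`D_m² = ∑_{|l| ≤ m} (-1)^l q^{l²} [2m, m+l]_{q²}`. After multiplication by `P_m` the weights
`P_m [2m, m+l]_{q²} = P_m P_{2m} / (P_{m+l} P_{m-l})` tend to `1` and stay uniformly bounded, so
dominated convergence gives `P_∞ D_∞² = ∑_{l ∈ ℤ} (-1)^l q^{l²}`. Finally `(q;q)_∞ = D_∞ P_∞` and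
`(q²;q²)_∞ = P_∞`.
-/

open Finset Filter Topology

section GaussianBinomial

variable {R : Type*} [CommRing R] (t : R)

/-- `(t;t)_n`. -/
def qPochhammer (n : ℕ) : R := ∏ j ∈ range n, (1 - t ^ (j + 1))

def gaussBinomial : ℕ → ℕ → R
  | _, 0 => 1
  | 0, _ + 1 => 0
  | n + 1, k + 1 => gaussBinomial n k + t ^ (k + 1) * gaussBinomial n (k + 1)

@[simp] lemma qPochhammer_zero : qPochhammer t 0 = 1 := prod_range_zero _

lemma qPochhammer_succ (n : ℕ) : qPochhammer t (n + 1) = qPochhammer t n * (1 - t ^ (n + 1)) :=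
  prod_range_succ _ _

@[simp] lemma gaussBinomial_zero_right (n : ℕ) : gaussBinomial t n 0 = 1 := by
  cases n <;> rfl

lemma gaussBinomial_succ_succ (n k : ℕ) :
    gaussBinomial t (n + 1) (k + 1) =
      gaussBinomial t n k + t ^ (k + 1) * gaussBinomial t n (k + 1) := rfl

lemma gaussBinomial_eq_zero_of_lt {n k : ℕ} (h : n < k) : gaussBinomial t n k = 0 := by
  induction n generalizing k with
  | zero => obtain ⟨k, rfl⟩ := Nat.exists_eq_add_one_of_ne_zero h.ne'; rfl
  | succ n ih =>
    obtain ⟨k, rfl⟩ := Nat.exists_eq_add_one_of_ne_zero (by omega : k ≠ 0)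
    rw [gaussBinomial_succ_succ, ih (by omega), ih (by omega), mul_zero, add_zero]

theorem gaussBinomial_add_mul_qPochhammer (i j : ℕ) :
    gaussBinomial t (i + j) i * qPochhammer t i * qPochhammer t j = qPochhammer t (i + j) := by
  induction i generalizing j with
  | zero => simp
  | succ i ihi =>
    induction j with
    | zero =>
      have := ihi 0
      simp only [add_zero, qPochhammer_zero, mul_one] at this ⊢
      rw [gaussBinomial_succ_succ, gaussBinomial_eq_zero_of_lt t (Nat.lt_succ_self i),
        qPochhammer_succ]
      linear_combination (1 - t ^ (i + 1)) * this
    | succ j ihj =>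
      rw [show i + 1 + (j + 1) = i + j + 1 + 1 by ring, gaussBinomial_succ_succ,
        qPochhammer_succ t (i + j + 1), qPochhammer_succ t i, qPochhammer_succ t j]
      rw [show i + 1 + j = i + j + 1 by ring, qPochhammer_succ t i] at ihj
      have ih := ihi (j + 1)
      rw [← add_assoc, qPochhammer_succ t j] at ih
      linear_combination (1 - t ^ (i + 1)) * ih + t ^ (i + 1) * (1 - t ^ (j + 1)) * ihj

/-- The `q`-binomial theorem. -/
theorem prod_add_mul_pow_eq_sum (x y : R) (n : ℕ) :
    ∏ j ∈ range n, (y + x * t ^ j) =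
      ∑ k ∈ range (n + 1), t ^ k.choose 2 * gaussBinomial t n k * x ^ k * y ^ (n - k) := by
  induction n generalizing x with
  | zero => simp
  | succ n ih =>
    -- peel off the factor `y + x`; the rest is the case `n` at `x * t`, and the two halves of
    -- `(y + x) * S` recombine through the Pascal rule for `gaussBinomial`
    have hx : ∏ j ∈ range n, (y + x * t ^ (j + 1)) = ∏ j ∈ range n, (y + x * t * t ^ j) := by
      simp_rw [pow_succ', mul_assoc]
    rw [prod_range_succ', hx, ih, sum_range_succ' _ (n + 1)]
    simp only [gaussBinomial_succ_succ]
    have hchoose (k : ℕ) : t ^ (k + 1).choose 2 = t ^ k.choose 2 * t ^ k := by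
      rw [Nat.choose_succ_succ', Nat.choose_one_right, pow_add, mul_comm]
    set S := ∑ k ∈ range (n + 1), t ^ k.choose 2 * gaussBinomial t n k * (x * t) ^ k * y ^ (n - k)
    have hxS : x * S = ∑ k ∈ range (n + 1),
        t ^ (k + 1).choose 2 * gaussBinomial t n k * x ^ (k + 1) * y ^ (n + 1 - (k + 1)) := by
      rw [mul_sum]
      refine sum_congr rfl fun k _ ↦ ?_
      rw [hchoose, Nat.add_sub_add_right]
      ring
    have hyS : y * S = ∑ k ∈ range (n + 1 + 1),
        t ^ k.choose 2 * t ^ k * gaussBinomial t n k * x ^ k * y ^ (n + 1 - k) := by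
      rw [sum_range_succ, gaussBinomial_eq_zero_of_lt t (Nat.lt_succ_self n), mul_sum]
      simp only [mul_zero, zero_mul, add_zero]
      refine sum_congr rfl fun k hk ↦ ?_
      rw [Nat.sub_add_comm (mem_range_succ_iff.1 hk), pow_succ]
      ring
    rw [show S * (y + x * t ^ 0) = x * S + y * S by ring, hxS, hyS,
      sum_range_succ'
        (fun k ↦ t ^ k.choose 2 * t ^ k * gaussBinomial t n k * x ^ k * y ^ (n + 1 - k)),
      ← add_assoc, ← sum_add_distrib]
    congr 1
    · refine sum_congr rfl fun k _ ↦ ?_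
      rw [hchoose]
      ring
    · simp

end GaussianBinomial

lemma two_mul_choose_two_add_self (n : ℕ) : 2 * n.choose 2 + n = n ^ 2 := by
  induction n with
  | zero => rfl
  | succ n ih =>
    rw [Nat.choose_succ_succ', Nat.choose_one_right]
    nlinarith

lemma sum_range_two_mul_add_one_eq_sum_Icc {M : Type*} [AddCommMonoid M] (f : ℕ → M) (m : ℕ) :
    ∑ k ∈ range (2 * m + 1), f k = ∑ l ∈ Icc (-m : ℤ) m, f (m + l).toNat :=
  sum_nbij' (fun k ↦ (k : ℤ) - m) (fun l ↦ (m + l).toNat) (by simp; omega) (by simp; omega)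
    (by simp) (by simp; omega) (by simp)

section FiniteGauss

variable {R : Type*} [CommRing R] (q : R)

lemma prod_neg_pow_two_mul_add_one (m : ℕ) :
    ∏ j ∈ range m, -q ^ (2 * j + 1) = (-1) ^ m * q ^ (m ^ 2) := by
  induction m with
  | zero => simp
  | succ m ih => rw [prod_range_succ, ih]; ring

lemma prod_range_two_mul_pow_sub_pow_odd (m : ℕ) :
    ∏ j ∈ range (2 * m), (q ^ (2 * m) - q ^ (2 * j + 1)) =
      (-1) ^ m * q ^ (3 * m ^ 2) * (∏ j ∈ range m, (1 - q ^ (2 * j + 1))) ^ 2 := by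
  have hlow : ∏ j ∈ range m, (q ^ (2 * m) - q ^ (2 * j + 1)) =
      (-1) ^ m * q ^ (m ^ 2) * ∏ j ∈ range m, (1 - q ^ (2 * j + 1)) := by
    rw [← prod_neg_pow_two_mul_add_one, ← prod_range_reflect (fun j ↦ 1 - q ^ (2 * j + 1)),
      ← prod_mul_distrib]
    refine prod_congr rfl fun j hj ↦ ?_
    have hjm := mem_range.1 hj
    rw [show 2 * m = 2 * j + 1 + (2 * (m - 1 - j) + 1) by omega, pow_add]
    ring
  have hhigh : ∏ j ∈ range m, (q ^ (2 * m) - q ^ (2 * (m + j) + 1)) =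
      q ^ (2 * m ^ 2) * ∏ j ∈ range m, (1 - q ^ (2 * j + 1)) := by
    calc ∏ j ∈ range m, (q ^ (2 * m) - q ^ (2 * (m + j) + 1))
        _ = ∏ j ∈ range m, (q ^ (2 * m) * (1 - q ^ (2 * j + 1))) := prod_congr rfl fun j _ ↦ by ring
        _ = _ := by rw [prod_mul_distrib, prod_const, card_range, ← pow_mul]; ring
  rw [two_mul m, prod_range_add, ← two_mul, hlow, hhigh]
  ring

lemma sq_pow_choose_two_mul_neg_pow_mul_pow_eq {m : ℕ} {l : ℤ} (hl : l ∈ Icc (-m : ℤ) m) :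
    (q ^ 2) ^ (m + l).toNat.choose 2 * (-q) ^ (m + l).toNat *
        (q ^ (2 * m)) ^ (2 * m - (m + l).toNat) =
      (-1) ^ m * q ^ (3 * m ^ 2) * ((-1) ^ l.natAbs * q ^ l.natAbs ^ 2) := by
  rw [mem_Icc] at hl
  obtain ⟨k, hk⟩ : ∃ k : ℕ, (m + l).toNat = k := ⟨_, rfl⟩
  have hkl : (k : ℤ) = m + l := by omega
  have hsign : (-1 : R) ^ k = (-1) ^ m * (-1) ^ l.natAbs := by
    rw [← pow_add, neg_one_pow_eq_pow_mod_two, neg_one_pow_eq_pow_mod_two (m + _)]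
    congr 1
    omega
  have hexp : 2 * k.choose 2 + k + 2 * m * (2 * m - k) = 3 * m ^ 2 + l.natAbs ^ 2 := by
    have := two_mul_choose_two_add_self k
    zify [(by omega : k ≤ 2 * m)] at this ⊢
    rw [sq_abs]
    linear_combination this + (k - m + l) * hkl
  have hpow : (q ^ 2) ^ k.choose 2 * q ^ k * (q ^ (2 * m)) ^ (2 * m - k) =
      q ^ (3 * m ^ 2) * q ^ l.natAbs ^ 2 := by
    rw [← pow_mul, ← pow_mul, ← pow_add, ← pow_add, ← pow_add, ← hexp]
  rw [hk, neg_pow, hsign]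
  linear_combination (-1) ^ m * (-1) ^ l.natAbs * hpow

theorem sq_prod_one_sub_pow_odd_eq_sum_Icc [IsDomain R] {q : R} (hq : q ≠ 0) (m : ℕ) :
    (∏ j ∈ range m, (1 - q ^ (2 * j + 1))) ^ 2 =
      ∑ l ∈ Icc (-m : ℤ) m,
        (-1) ^ l.natAbs * q ^ l.natAbs ^ 2 * gaussBinomial (q ^ 2) (2 * m) (m + l).toNat := by
  have hbinom := prod_add_mul_pow_eq_sum (q ^ 2) (-q) (q ^ (2 * m)) (2 * m)
  have hfactor (j : ℕ) : q ^ (2 * m) + -q * (q ^ 2) ^ j = q ^ (2 * m) - q ^ (2 * j + 1) := by ring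
  simp only [hfactor] at hbinom
  rw [prod_range_two_mul_pow_sub_pow_odd, sum_range_two_mul_add_one_eq_sum_Icc] at hbinom
  have hterm : ∀ l ∈ Icc (-m : ℤ) m,
      (q ^ 2) ^ (m + l).toNat.choose 2 * gaussBinomial (q ^ 2) (2 * m) (m + l).toNat *
          (-q) ^ (m + l).toNat * (q ^ (2 * m)) ^ (2 * m - (m + l).toNat) =
        (-1) ^ m * q ^ (3 * m ^ 2) *
          ((-1) ^ l.natAbs * q ^ l.natAbs ^ 2 * gaussBinomial (q ^ 2) (2 * m) (m + l).toNat) :=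
    fun l hl ↦ by
      rw [mul_right_comm _ (gaussBinomial _ _ _), mul_right_comm _ (gaussBinomial _ _ _),
        sq_pow_choose_two_mul_neg_pow_mul_pow_eq q hl]
      ring
  rw [sum_congr rfl hterm, ← mul_sum] at hbinom
  exact mul_left_cancel₀ (by simp [hq]) hbinom

end FiniteGauss

section Limits

variable {𝕜 : Type*} [NormedField 𝕜] {t : 𝕜}

lemma one_sub_pow_ne_zero (ht : ‖t‖ < 1) {n : ℕ} (hn : n ≠ 0) : 1 - t ^ n ≠ 0 := by
  refine sub_ne_zero.2 fun h ↦ ?_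
  have := pow_lt_one₀ (norm_nonneg t) ht hn
  rw [← norm_pow, ← h, norm_one] at this
  exact this.false

lemma qPochhammer_ne_zero (ht : ‖t‖ < 1) (n : ℕ) : qPochhammer t n ≠ 0 :=
  prod_ne_zero_iff.2 fun j _ ↦ one_sub_pow_ne_zero ht j.succ_ne_zero

lemma summable_norm_neg_pow_comp (ht : ‖t‖ < 1) {e : ℕ → ℕ} (he : ∀ n, n ≤ e n) :
    Summable fun n ↦ ‖-t ^ e n‖ := by
  refine (summable_geometric_of_lt_one (norm_nonneg t) ht).of_nonneg_of_le (fun _ ↦ norm_nonneg _)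
    fun n ↦ ?_
  rw [norm_neg, norm_pow]
  exact pow_le_pow_of_le_one (norm_nonneg t) ht.le (he n)

lemma multipliable_one_sub_pow_comp [CompleteSpace 𝕜] (ht : ‖t‖ < 1) {e : ℕ → ℕ}
    (he : ∀ n, n ≤ e n) : Multipliable fun n ↦ 1 - t ^ e n := by
  simpa only [sub_eq_add_neg] using
    multipliable_one_add_of_summable (summable_norm_neg_pow_comp ht he)

lemma tprod_one_sub_pow_ne_zero [CompleteSpace 𝕜] (ht : ‖t‖ < 1) : ∏' n, (1 - t ^ (n + 1)) ≠ 0 := by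
  simpa only [sub_eq_add_neg] using tprod_one_add_ne_zero_of_summable
    (fun n ↦ by simpa only [← sub_eq_add_neg] using one_sub_pow_ne_zero ht n.succ_ne_zero)
    (summable_norm_neg_pow_comp ht fun n ↦ n.le_succ)

lemma tendsto_qPochhammer [CompleteSpace 𝕜] (ht : ‖t‖ < 1) :
    Tendsto (qPochhammer t) atTop (𝓝 (∏' n, (1 - t ^ (n + 1)))) :=
  (multipliable_one_sub_pow_comp ht fun n ↦ n.le_succ).tendsto_prod_tprod_nat

lemma qPochhammer_mul_gaussBinomial (ht : ‖t‖ < 1) {m : ℕ} {l : ℤ} (hl : l ∈ Icc (-m : ℤ) m) :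
    qPochhammer t m * gaussBinomial t (2 * m) (m + l).toNat =
      qPochhammer t m * qPochhammer t (2 * m) /
        (qPochhammer t (m + l).toNat * qPochhammer t (m - l).toNat) := by
  rw [mem_Icc] at hl
  have h := gaussBinomial_add_mul_qPochhammer t (m + l).toNat (m - l).toNat
  rw [show (m + l).toNat + (m - l).toNat = 2 * m by omega] at h
  rw [eq_div_iff (mul_ne_zero (qPochhammer_ne_zero ht _) (qPochhammer_ne_zero ht _)), ← h]
  ring

lemma tendsto_qPochhammer_ratio [CompleteSpace 𝕜] (ht : ‖t‖ < 1) (l : ℤ) :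
    Tendsto (fun m : ℕ ↦ qPochhammer t m * qPochhammer t (2 * m) /
      (qPochhammer t (m + l).toNat * qPochhammer t (m - l).toNat)) atTop (𝓝 1) := by
  have hP := tendsto_qPochhammer ht
  have hL := tprod_one_sub_pow_ne_zero ht
  have hidx {f : ℕ → ℕ} (hf : ∀ m, m ≤ f m + l.natAbs) : Tendsto f atTop atTop :=
    tendsto_atTop_atTop.2 fun b ↦ ⟨b + l.natAbs, fun m hm ↦ by have := hf m; omega⟩
  have hlim := (hP.mul (hP.comp (hidx (f := (2 * ·)) fun m ↦ by omega))).div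
    ((hP.comp (hidx (f := fun m ↦ (m + l).toNat) fun m ↦ by omega)).mul
      (hP.comp (hidx (f := fun m ↦ (m - l).toNat) fun m ↦ by omega))) (mul_ne_zero hL hL)
  rwa [div_self (mul_ne_zero hL hL)] at hlim

lemma exists_norm_qPochhammer_ratio_le [CompleteSpace 𝕜] (ht : ‖t‖ < 1) : ∃ C, ∀ (m : ℕ) (l : ℤ),
    ‖qPochhammer t m * qPochhammer t (2 * m) /
      (qPochhammer t (m + l).toNat * qPochhammer t (m - l).toNat)‖ ≤ C := by
  have hP := tendsto_qPochhammer ht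
  obtain ⟨B, hB⟩ := (Metric.isBounded_range_of_tendsto _ hP).exists_norm_le
  obtain ⟨B', hB'⟩ := (Metric.isBounded_range_of_tendsto _
    (hP.inv₀ (tprod_one_sub_pow_ne_zero ht))).exists_norm_le
  refine ⟨B * B * (B' * B'), fun m l ↦ ?_⟩
  rw [div_eq_mul_inv, mul_inv, norm_mul, norm_mul, norm_mul]
  have h0 : 0 ≤ B := (norm_nonneg _).trans (hB _ ⟨0, rfl⟩)
  have h0' : 0 ≤ B' := (norm_nonneg _).trans (hB' _ ⟨0, rfl⟩)
  gcongr
  exacts [hB _ ⟨_, rfl⟩, hB _ ⟨_, rfl⟩, hB' _ ⟨_, rfl⟩, hB' _ ⟨_, rfl⟩]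

end Limits

section Gauss

variable {𝕜 : Type*} [NormedField 𝕜] [CompleteSpace 𝕜] {q : 𝕜}

lemma summable_pow_natAbs {r : ℝ} (hr0 : 0 ≤ r) (hr : r < 1) :
    Summable fun l : ℤ ↦ r ^ l.natAbs :=
  .of_nat_of_neg (by simpa using summable_geometric_of_lt_one hr0 hr)
    (by simpa using summable_geometric_of_lt_one hr0 hr)

omit [CompleteSpace 𝕜] in
lemma norm_neg_one_pow_mul_pow_sq_le (hq : ‖q‖ < 1) (l : ℤ) :
    ‖(-1) ^ l.natAbs * q ^ l.natAbs ^ 2‖ ≤ ‖q‖ ^ l.natAbs := by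
  rw [norm_mul, norm_pow, norm_neg, norm_one, one_pow, one_mul, norm_pow]
  exact pow_le_pow_of_le_one (norm_nonneg q) hq.le (Nat.le_self_pow two_ne_zero _)

lemma summable_neg_one_pow_mul_pow_sq (hq : ‖q‖ < 1) :
    Summable fun l : ℤ ↦ (-1) ^ l.natAbs * q ^ l.natAbs ^ 2 :=
  (summable_pow_natAbs (norm_nonneg q) hq).of_norm_bounded (norm_neg_one_pow_mul_pow_sq_le hq)

lemma tsum_int_neg_one_pow_mul_pow_sq (hq : ‖q‖ < 1) :
    ∑' l : ℤ, (-1) ^ l.natAbs * q ^ l.natAbs ^ 2 =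
      1 + 2 * ∑' n : ℕ, (-1) ^ (n + 1) * q ^ ((n + 1) ^ 2) := by
  have heven : Function.Even fun l : ℤ ↦ (-1 : 𝕜) ^ l.natAbs * q ^ l.natAbs ^ 2 :=
    fun l ↦ by simp only [Int.natAbs_neg]
  rw [tsum_int_eq_zero_add_two_mul_tsum_pnat heven (summable_neg_one_pow_mul_pow_sq hq)]
  simp only [Int.natAbs_natCast]
  rw [tsum_pnat_eq_tsum_succ (f := fun n ↦ (-1) ^ n * q ^ n ^ 2)]
  simp [nsmul_eq_mul]

lemma tendsto_sum_Icc_mul_qPochhammer_ratio {t : 𝕜} (ht : ‖t‖ < 1) (hq : ‖q‖ < 1) :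
    Tendsto (fun m : ℕ ↦ ∑ l ∈ Icc (-m : ℤ) m, (-1) ^ l.natAbs * q ^ l.natAbs ^ 2 *
        (qPochhammer t m * qPochhammer t (2 * m) /
          (qPochhammer t (m + l).toNat * qPochhammer t (m - l).toNat)))
      atTop (𝓝 (∑' l : ℤ, (-1) ^ l.natAbs * q ^ l.natAbs ^ 2)) := by
  obtain ⟨C, hC⟩ := exists_norm_qPochhammer_ratio_le ht
  have hC0 : 0 ≤ C := (norm_nonneg _).trans (hC 0 0)
  set F : ℕ → ℤ → 𝕜 := fun m l ↦ if l ∈ Icc (-m : ℤ) m then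
    (-1) ^ l.natAbs * q ^ l.natAbs ^ 2 * (qPochhammer t m * qPochhammer t (2 * m) /
      (qPochhammer t (m + l).toNat * qPochhammer t (m - l).toNat)) else 0
  have hF (m : ℕ) : ∑' l, F m l = ∑ l ∈ Icc (-m : ℤ) m, (-1) ^ l.natAbs * q ^ l.natAbs ^ 2 *
      (qPochhammer t m * qPochhammer t (2 * m) /
        (qPochhammer t (m + l).toNat * qPochhammer t (m - l).toNat)) :=
    (tsum_eq_sum fun l hl ↦ if_neg hl).trans (sum_congr rfl fun l hl ↦ if_pos hl)
  simp_rw [← hF]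
  refine tendsto_tsum_of_dominated_convergence
    ((summable_pow_natAbs (norm_nonneg q) hq).mul_left C) (fun l ↦ ?_) (.of_forall fun m l ↦ ?_)
  · have := (tendsto_qPochhammer_ratio ht l).const_mul ((-1) ^ l.natAbs * q ^ l.natAbs ^ 2)
    rw [mul_one] at this
    refine this.congr' ?_
    filter_upwards [eventually_ge_atTop l.natAbs] with m hm
    exact (if_pos (by rw [mem_Icc]; omega)).symm
  · simp only [F]
    split_ifs
    · rw [norm_mul, mul_comm]
      exact mul_le_mul (hC m l) (norm_neg_one_pow_mul_pow_sq_le hq l) (norm_nonneg _) hC0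
    · rw [norm_zero]
      positivity

theorem tprod_mul_sq_tprod_odd_eq_tsum_int (hq : ‖q‖ < 1) (hq0 : q ≠ 0) :
    (∏' n, (1 - (q ^ 2) ^ (n + 1))) * (∏' n, (1 - q ^ (2 * n + 1))) ^ 2 =
      ∑' l : ℤ, (-1) ^ l.natAbs * q ^ l.natAbs ^ 2 := by
  have ht : ‖q ^ 2‖ < 1 := by rw [norm_pow]; exact pow_lt_one₀ (norm_nonneg q) hq two_ne_zero
  have hfinite (m : ℕ) : qPochhammer (q ^ 2) m * (∏ j ∈ range m, (1 - q ^ (2 * j + 1))) ^ 2 =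
      ∑ l ∈ Icc (-m : ℤ) m, (-1) ^ l.natAbs * q ^ l.natAbs ^ 2 *
        (qPochhammer (q ^ 2) m * qPochhammer (q ^ 2) (2 * m) /
          (qPochhammer (q ^ 2) (m + l).toNat * qPochhammer (q ^ 2) (m - l).toNat)) := by
    rw [sq_prod_one_sub_pow_odd_eq_sum_Icc hq0, mul_sum]
    refine sum_congr rfl fun l hl ↦ ?_
    rw [← qPochhammer_mul_gaussBinomial ht hl]
    ring
  have hodd := multipliable_one_sub_pow_comp hq (e := (2 * · + 1)) fun n ↦ by omega
  refine tendsto_nhds_unique ?_ (tendsto_sum_Icc_mul_qPochhammer_ratio ht hq)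
  simp_rw [← hfinite]
  exact (tendsto_qPochhammer ht).mul (hodd.tendsto_prod_tprod_nat.pow 2)

lemma tprod_one_sub_pow_eq_mul (hq : ‖q‖ < 1) :
    ∏' n, (1 - q ^ (n + 1)) = (∏' n, (1 - q ^ (2 * n + 1))) * ∏' n, (1 - (q ^ 2) ^ (n + 1)) := by
  have heven : ∀ n, 1 - (q ^ 2) ^ (n + 1) = 1 - q ^ (2 * n + 1 + 1) := fun n ↦ by ring
  simp_rw [heven]
  exact (tprod_even_mul_odd (f := fun n ↦ 1 - q ^ (n + 1))
    (multipliable_one_sub_pow_comp hq fun n ↦ by omega)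
    (multipliable_one_sub_pow_comp hq fun n ↦ by omega)).symm

end Gauss

/-- For `|q| < 1`, `(q;q)_∞² / (q²;q²)_∞ = 1 + 2 ∑_{n ≥ 1} (-1)ⁿ q^{n²}`. -/
theorem stmt10 (q : ℂ) (hq : ‖q‖ < 1) :
    (∏' n : ℕ, (1 - q ^ (n + 1))) ^ 2 / (∏' n : ℕ, (1 - q ^ (2 * (n + 1)))) =
      1 + 2 * ∑' n : ℕ, (-1 : ℂ) ^ (n + 1) * q ^ ((n + 1) ^ 2) := by
  rcases eq_or_ne q 0 with rfl | hq0
  · simp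
  have hsq : ∏' n : ℕ, (1 - q ^ (2 * (n + 1))) = ∏' n : ℕ, (1 - (q ^ 2) ^ (n + 1)) := by
    simp_rw [pow_mul]
  have ht : ‖q ^ 2‖ < 1 := by rw [norm_pow]; exact pow_lt_one₀ (norm_nonneg q) hq two_ne_zero
  rw [tprod_one_sub_pow_eq_mul hq, hsq, ← tsum_int_neg_one_pow_mul_pow_sq hq,
    ← tprod_mul_sq_tprod_odd_eq_tsum_int hq hq0]
  field_simp [tprod_one_sub_pow_ne_zero ht]
end

section
/- Let S be a subset of the positive integers and let q be a complex number with |q| < 1. Then ∑_{N=1}^∞ c_S(N) q^N = ∑_{n ∈ S} q^n ∏_{m=1}^∞ (1 − q^{m+n}), where c_S(N) := (number of partitions of N into an odd number of distinct parts with smallest part in S) − (number of partitions of N into an even number of distinct parts with smallest part in S). In other words, the partition sum ∑_{λ: sm(λ)∈S} μ*_P(λ) q^{|λ|} equals ∑_{n ∈ S} q^n ∏_{m=1}^∞ (1 − q^{m+n}). -/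
/-!
Expanding `∏_m (1 - q^(m+1+n)) = ∑_{s finite} ∏_{m ∈ s} (-q^(m+1+n))`, the term indexed by
`(n, s)` on the right-hand side is `(-1)^|s| q^|λ|` for the partition `λ` with parts `n` and
`m + 1 + n` (`m ∈ s`). The map `(n, s) ↦ λ` is a bijection from pairs with `n ∈ S` onto
partitions into distinct parts with smallest part in `S`, and `ℓ(λ) = |s| + 1`, so the sign is
`μ*_P(λ)`. For `‖q‖ < 1` the double sum converges absolutely, so it may be regrouped by `|λ|`.
-/

open scoped Classical in
/-- The signed count of partitions of `N` into distinct parts with smallest part in `S`: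
(number with an odd number of parts) minus (number with an even number of parts). -/
noncomputable def signedCount (S : Set ℕ) (N : ℕ) : ℤ :=
  ((Finset.univ.filter fun l : N.Partition =>
      l.parts.Nodup ∧ Odd (Multiset.card l.parts) ∧
        ∃ s ∈ l.parts, s ∈ S ∧ ∀ x ∈ l.parts, s ≤ x).card : ℤ) -
  ((Finset.univ.filter fun l : N.Partition =>
      l.parts.Nodup ∧ Even (Multiset.card l.parts) ∧
        ∃ s ∈ l.parts, s ∈ S ∧ ∀ x ∈ l.parts, s ≤ x).card : ℤ)

theorem summable_mul_prod_of_norm_le {ι κ R : Type*} [NormedCommRing R] [NormOneClass R]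
    [CompleteSpace R] {u : ι → R} {g : ι → κ → R} {b : κ → ℝ} (hu : Summable (‖u ·‖))
    (hb0 : ∀ k, 0 ≤ b k) (hb : Summable b) (hg : ∀ i k, ‖g i k‖ ≤ b k) :
    Summable fun p : ι × Finset κ => u p.1 * ∏ k ∈ p.2, g p.1 k := by
  refine .of_norm_bounded (hu.mul_of_nonneg (summable_finsetProd_of_summable_nonneg hb0 hb)
    (fun _ => norm_nonneg _) fun _ => Finset.prod_nonneg fun k _ => hb0 k) fun ⟨i, s⟩ => ?_
  calc ‖u i * ∏ k ∈ s, g i k‖ ≤ ‖u i‖ * ∏ k ∈ s, ‖g i k‖ :=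
        (norm_mul_le _ _).trans (by gcongr; exact Finset.norm_prod_le _ _)
    _ ≤ ‖u i‖ * ∏ k ∈ s, b k := by gcongr with k; exact hg i k

section PowerSeries

variable {𝕜 : Type*} [NormedField 𝕜] {q : 𝕜} (hq : ‖q‖ < 1)
include hq

theorem summable_norm_neg_pow_succ_add (n : ℕ) : Summable fun m => ‖-q ^ (m + 1 + n)‖ := by
  simpa [add_assoc] using
    (summable_nat_add_iff (1 + n)).2 (summable_geometric_of_lt_one (norm_nonneg q) hq)

theorem pow_mul_tprod_one_sub_pow [CompleteSpace 𝕜] (n : ℕ) :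
    q ^ n * ∏' m : ℕ, (1 - q ^ (m + 1 + n)) =
      ∑' s : Finset ℕ, q ^ n * ∏ m ∈ s, -q ^ (m + 1 + n) := by
  simp_rw [sub_eq_add_neg]
  rw [tprod_one_add (summable_finsetProd_of_summable_norm (summable_norm_neg_pow_succ_add hq n)),
    tsum_mul_left]

theorem summable_pow_mul_prod_neg_pow [CompleteSpace 𝕜] (S : Set ℕ) :
    Summable fun p : S × Finset ℕ => q ^ (p.1 : ℕ) * ∏ m ∈ p.2, -q ^ (m + 1 + (p.1 : ℕ)) := by
  have hgeo := summable_geometric_of_lt_one (norm_nonneg q) hq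
  have hshift : Summable fun m : ℕ => ‖q‖ ^ (m + 1) := (summable_nat_add_iff 1).2 hgeo
  have hpow : Summable fun n : S => ‖q ^ (n : ℕ)‖ := by
    simp only [norm_pow]
    exact hgeo.comp_injective Subtype.val_injective
  have hle : ∀ (n : S) (m : ℕ), ‖-q ^ (m + 1 + (n : ℕ))‖ ≤ ‖q‖ ^ (m + 1) := fun n m => by
    rw [norm_neg, norm_pow]
    exact pow_le_pow_of_le_one (norm_nonneg q) hq.le (by omega)
  exact summable_mul_prod_of_norm_le (u := fun n : S => q ^ (n : ℕ))
    (g := fun n m => -q ^ (m + 1 + (n : ℕ))) hpow (fun _ => by positivity) hshift hle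

end PowerSeries

def shiftParts (n : ℕ) (s : Finset ℕ) : Multiset ℕ :=
  n ::ₘ s.val.map (· + 1 + n)

section ShiftParts

variable {n : ℕ} {s : Finset ℕ}

theorem card_shiftParts : Multiset.card (shiftParts n s) = s.card + 1 := by
  simp [shiftParts]

theorem sum_shiftParts : (shiftParts n s).sum = n + ∑ m ∈ s, (m + 1 + n) := by
  rw [shiftParts, Multiset.sum_cons]; rfl

theorem add_one_add_injective (n : ℕ) : Function.Injective (· + 1 + n) :=
  fun _ _ h => by simpa using h

theorem mem_shiftParts_self : n ∈ shiftParts n s :=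
  Multiset.mem_cons_self _ _

theorem le_of_mem_shiftParts {x : ℕ} (hx : x ∈ shiftParts n s) : n ≤ x := by
  simp only [shiftParts, Multiset.mem_cons, Multiset.mem_map, Finset.mem_val] at hx
  omega

theorem nodup_shiftParts : (shiftParts n s).Nodup :=
  Multiset.nodup_cons.2 ⟨by simp, s.nodup.map (add_one_add_injective n)⟩

theorem shiftParts_inj {n' : ℕ} {s' : Finset ℕ} :
    shiftParts n s = shiftParts n' s' ↔ n = n' ∧ s = s' := by
  refine ⟨fun h => ?_, fun ⟨rfl, rfl⟩ => rfl⟩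
  obtain rfl : n = n' := le_antisymm (le_of_mem_shiftParts (h.symm ▸ mem_shiftParts_self))
    (le_of_mem_shiftParts (h ▸ mem_shiftParts_self))
  exact ⟨rfl, Finset.val_injective <|
    Multiset.map_injective (add_one_add_injective n) ((Multiset.cons_inj_right _).1 h)⟩

theorem exists_shiftParts_eq {M : Multiset ℕ} (hM : M.Nodup) {p : ℕ} (hp : p ∈ M)
    (hmin : ∀ x ∈ M, p ≤ x) : ∃ s, shiftParts p s = M := by
  have hlt : ∀ x ∈ M.erase p, p < x := fun x hx =>
    (hmin x (Multiset.mem_of_mem_erase hx)).lt_of_ne fun h => (hM.mem_erase_iff.1 hx).1 h.symm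
  refine ⟨⟨(M.erase p).map (· - (p + 1)), (hM.erase p).map_on fun x hx y hy h => ?_⟩, ?_⟩
  · have := hlt x hx; have := hlt y hy; omega
  · conv_rhs => rw [← Multiset.cons_erase hp]
    simp only [shiftParts, Multiset.map_map]
    congr 1
    conv_rhs => rw [← Multiset.map_id (M.erase p)]
    refine Multiset.map_congr rfl fun x hx => ?_
    have := hlt x hx
    simp only [Function.comp_apply, id]
    omega

end ShiftParts

def DistinctWithSmallestIn (S : Set ℕ) {N : ℕ} (l : N.Partition) : Prop :=
  l.parts.Nodup ∧ ∃ p ∈ l.parts, p ∈ S ∧ ∀ x ∈ l.parts, p ≤ x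

abbrev DistinctPartitionWithSmallestIn (S : Set ℕ) : Type :=
  Σ N : ℕ, {l : N.Partition // DistinctWithSmallestIn S l}

open scoped Classical in
theorem signedCount_eq_sum {R : Type*} [Ring R] (S : Set ℕ) (N : ℕ) :
    (signedCount S N : R) =
      ∑ l : {l : N.Partition // DistinctWithSmallestIn S l},
        (-1 : R) ^ (Multiset.card l.1.parts + 1) := by
  rw [← Finset.sum_subtype (Finset.univ.filter (DistinctWithSmallestIn S)) (by simp)
    fun l => (-1 : R) ^ (Multiset.card l.parts + 1), Finset.sum_filter, signedCount,
    Finset.card_filter, Finset.card_filter]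
  push_cast
  rw [← Finset.sum_sub_distrib]
  refine Finset.sum_congr rfl fun l _ => ?_
  simp only [neg_one_pow_eq_ite, Nat.even_add_one, ← Nat.not_odd_iff_even, not_not]
  unfold DistinctWithSmallestIn
  split_ifs <;> simp_all

namespace DistinctPartitionWithSmallestIn

variable {S : Set ℕ} {R : Type*}

theorem ext_parts {σ τ : DistinctPartitionWithSmallestIn S}
    (h : σ.2.1.parts = τ.2.1.parts) : σ = τ := by
  obtain ⟨N, l, hl⟩ := σ
  obtain ⟨M, m, hm⟩ := τ
  obtain rfl : N = M := by rw [← l.parts_sum, ← m.parts_sum, h]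
  obtain rfl : l = m := Nat.Partition.ext h
  rfl

def ofShiftParts (hS : 0 ∉ S) (p : S × Finset ℕ) : DistinctPartitionWithSmallestIn S :=
  ⟨_, ⟨shiftParts p.1 p.2, fun hx =>
      (Nat.pos_of_ne_zero (ne_of_mem_of_not_mem p.1.2 hS)).trans_le (le_of_mem_shiftParts hx),
      rfl⟩,
    nodup_shiftParts, p.1, mem_shiftParts_self, p.1.2, fun _ => le_of_mem_shiftParts⟩

theorem ofShiftParts_bijective (hS : 0 ∉ S) : Function.Bijective (ofShiftParts hS) := by
  refine ⟨fun ⟨n, s⟩ ⟨n', s'⟩ h => ?_, fun ⟨N, l, hnd, p, hp, hpS, hmin⟩ => ?_⟩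
  · obtain ⟨hn, rfl⟩ := shiftParts_inj.1 (congrArg (fun σ => σ.2.1.parts) h)
    exact Prod.ext (Subtype.ext hn) rfl
  · obtain ⟨s, hs⟩ := exists_shiftParts_eq hnd hp hmin
    exact ⟨(⟨p, hpS⟩, s), ext_parts hs⟩

noncomputable def equivShiftParts (hS : 0 ∉ S) :
    S × Finset ℕ ≃ DistinctPartitionWithSmallestIn S :=
  .ofBijective _ (ofShiftParts_bijective hS)

/-- `μ*_P(λ) q^|λ|`. -/
def signedWeight [CommRing R] (q : R) (σ : DistinctPartitionWithSmallestIn S) : R :=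
  (-1) ^ (Multiset.card σ.2.1.parts + 1) * q ^ σ.1

theorem signedWeight_ofShiftParts [CommRing R] (hS : 0 ∉ S) (q : R) (n : S) (s : Finset ℕ) :
    signedWeight q (ofShiftParts hS (n, s)) =
      q ^ (n : ℕ) * ∏ m ∈ s, -q ^ (m + 1 + (n : ℕ)) := by
  change (-1 : R) ^ (Multiset.card (shiftParts n s) + 1) * q ^ (shiftParts n s).sum = _
  rw [card_shiftParts, sum_shiftParts, Finset.prod_neg,
    Finset.prod_pow_eq_pow_sum, pow_add, pow_succ, pow_succ]
  ring

theorem tsum_signedWeight_sigma_mk [CommRing R] [TopologicalSpace R] (q : R) (N : ℕ) :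
    ∑' l, signedWeight q (⟨N, l⟩ : DistinctPartitionWithSmallestIn S) =
      signedCount S N * q ^ N := by
  classical
  rw [tsum_fintype, signedCount_eq_sum, Finset.sum_mul]
  rfl

theorem tsum_signedCount_mul_pow [NormedCommRing R] [CompleteSpace R] (hS : 0 ∉ S) {q : R}
    (hsum : Summable fun p : S × Finset ℕ => q ^ (p.1 : ℕ) * ∏ m ∈ p.2, -q ^ (m + 1 + (p.1 : ℕ))) :
    ∑' N : ℕ, (signedCount S N : R) * q ^ N =
      ∑' p : S × Finset ℕ, q ^ (p.1 : ℕ) * ∏ m ∈ p.2, -q ^ (m + 1 + (p.1 : ℕ)) := by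
  have hweight (p : S × Finset ℕ) := signedWeight_ofShiftParts hS q p.1 p.2
  have hsummable : Summable (signedWeight q : DistinctPartitionWithSmallestIn S → R) :=
    (equivShiftParts hS).summable_iff.1 (hsum.congr fun p => (hweight p).symm)
  calc ∑' N : ℕ, (signedCount S N : R) * q ^ N
      = ∑' (N : ℕ) (l), signedWeight q (⟨N, l⟩ : DistinctPartitionWithSmallestIn S) :=
        tsum_congr fun N => (tsum_signedWeight_sigma_mk q N).symm
    _ = ∑' σ, signedWeight q σ := hsummable.tsum_sigma.symm
    _ = ∑' p, signedWeight q (equivShiftParts hS p) := ((equivShiftParts hS).tsum_eq _).symm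
    _ = _ := tsum_congr hweight

end DistinctPartitionWithSmallestIn

/-- For `S` a set of positive integers and `|q| < 1`,
`∑_{N ≥ 1} c_S(N) q^N = ∑_{n ∈ S} qⁿ ∏_{m=1}^∞ (1 - q^{m+n})`, i.e. the partition sum
`∑_{sm(λ) ∈ S} μ*_P(λ) q^{|λ|}` equals `F_S(q)`. -/
theorem stmt11 (S : Set ℕ) (hS : 0 ∉ S) (q : ℂ) (hq : ‖q‖ < 1) :
    ∑' N : ℕ, (signedCount S N : ℂ) * q ^ N =
      ∑' n : S, q ^ (n : ℕ) * ∏' m : ℕ, (1 - q ^ (m + 1 + (n : ℕ))) := by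
  have hsum := summable_pow_mul_prod_neg_pow hq S
  rw [DistinctPartitionWithSmallestIn.tsum_signedCount_mul_pow hS hsum, hsum.tsum_prod]
  exact tsum_congr fun n => (pow_mul_tprod_one_sub_pow hq n).symm
end

section
/- For every complex number q with |q| < 1, one has ∑_{n=1}^∞ q^n ∏_{m=1}^∞ (1 − q^{m+n}) = 1 − ∏_{n=1}^∞ (1 − q^n); equivalently, F_{S_{1,2}}(q) + F_{S_{2,2}}(q) = 1 − (q;q)_∞. -/
/-!
With `T n = ∏_{m ≥ n} (1 - a m)` one has `T n = (1 - a n) T (n + 1)`, so `a n T (n + 1)` is the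
telescoping difference `T (n + 1) - T n`. The tails `T n` tend to `1` whenever `∑ a n` converges
(and no factor vanishes), so the series sums to `1 - T 0`; take `a n = q ^ (n + 1)`.
-/

open Filter Topology

section OneSubProduct

variable {a : ℕ → ℂ}

lemma tprod_one_sub_eq_mul_tprod_succ (ha : Summable a) (n : ℕ) :
    ∏' m, (1 - a (m + n)) = (1 - a n) * ∏' m, (1 - a (m + (n + 1))) := by
  have hshift : Summable fun m => -a (m + 1 + n) :=
    ((summable_nat_add_iff (n + 1)).2 ha).neg.congr fun m => by rw [add_assoc, add_comm 1 n]
  have hmul : Multipliable fun m => 1 - a (m + 1 + n) := by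
    simpa only [← sub_eq_add_neg] using Complex.multipliable_one_add_of_summable hshift
  rw [tprod_eq_zero_mul' (f := fun m => 1 - a (m + n)) hmul, zero_add]
  simp only [add_assoc, add_comm 1 n]

/-- The tails are `exp` of the tails of the summable series `∑ log (1 - a m)`. -/
lemma tendsto_tprod_one_sub_nat_add (ha : Summable a) (ha_ne : ∀ n, a n ≠ 1) :
    Tendsto (fun n => ∏' m, (1 - a (m + n))) atTop (𝓝 1) := by
  have hlog : Summable fun m => Complex.log (1 - a m) := by
    simpa only [sub_eq_add_neg] using Complex.summable_log_one_add_of_summable ha.neg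
  have htail (n : ℕ) :
      ∏' m, (1 - a (m + n)) = Complex.exp (∑' m, Complex.log (1 - a (m + n))) :=
    (Complex.cexp_tsum_eq_tprod (fun m => sub_ne_zero.2 (ha_ne (m + n)).symm)
      ((summable_nat_add_iff n).2 hlog)).symm
  have hexp := (Complex.continuous_exp.tendsto 0).comp
    (tendsto_sum_nat_add fun m => Complex.log (1 - a m))
  rw [Complex.exp_zero] at hexp
  exact hexp.congr fun n => (htail n).symm

theorem hasSum_mul_tprod_one_sub (ha : Summable a) (ha_ne : ∀ n, a n ≠ 1) :
    HasSum (fun n => a n * ∏' m, (1 - a (m + (n + 1)))) (1 - ∏' m, (1 - a m)) := by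
  let T : ℕ → ℂ := fun n => ∏' m, (1 - a (m + n))
  have hT_lim : Tendsto T atTop (𝓝 1) := tendsto_tprod_one_sub_nat_add ha ha_ne
  have htelescope (n : ℕ) : a n * T (n + 1) = T (n + 1) - T n := by
    simp only [T]
    rw [tprod_one_sub_eq_mul_tprod_succ ha n]
    ring
  have hsummable : Summable fun n => a n * T (n + 1) := by
    refine Summable.of_norm_bounded_eventually_nat ((summable_norm_iff.2 ha).mul_left 2) ?_
    have hT_bdd : ∀ᶠ n in atTop, ‖T (n + 1)‖ ≤ 2 :=
      ((tendsto_add_atTop_iff_nat 1).2 hT_lim).norm.eventually_le_const (by norm_num)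
    filter_upwards [hT_bdd] with n hn
    rw [norm_mul, mul_comm 2]
    exact mul_le_mul_of_nonneg_left hn (norm_nonneg _)
  show HasSum (fun n => a n * T (n + 1)) (1 - T 0)
  rw [hsummable.hasSum_iff_tendsto_nat]
  simpa only [htelescope, Finset.sum_range_sub] using hT_lim.sub_const (T 0)

end OneSubProduct

/-- For `|q| < 1`, `∑_{n ≥ 1} qⁿ ∏_{m=1}^∞ (1 - q^{m+n}) = 1 - (q;q)_∞`; equivalently
`F_{S_{1,2}}(q) + F_{S_{2,2}}(q) = 1 - (q;q)_∞`. -/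
theorem stmt16 (q : ℂ) (hq : ‖q‖ < 1) :
    ∑' n : ℕ, q ^ (n + 1) * ∏' m : ℕ, (1 - q ^ (m + 1 + (n + 1))) =
      1 - ∏' n : ℕ, (1 - q ^ (n + 1)) := by
  have hsummable : Summable fun n : ℕ => q ^ (n + 1) :=
    (summable_nat_add_iff 1).2 (summable_geometric_of_norm_lt_one hq)
  have hne_one (n : ℕ) : q ^ (n + 1) ≠ 1 := by
    refine ne_of_apply_ne norm ?_
    rw [norm_pow, norm_one]
    exact (pow_lt_one₀ (norm_nonneg q) hq n.succ_ne_zero).ne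
  simpa only [add_right_comm _ _ 1] using (hasSum_mul_tprod_one_sub hsummable hne_one).tsum_eq
end
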